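/- Let A be a C*-algebra, E and F Hilbert A-modules, and T : E → F adjointable with adjoint T*. Suppose there is an adjointable W : E → F with ‖W‖ ≤ 1 and adjoint W* satisfying W∘(T*∘T)∘W* = T∘T* and W*∘(T∘T*)∘W = T*∘T (these identities hold for the partial isometry in the polar decomposition of T whenever E = ker T ⊕ closure(ran T*) and F = ker T* ⊕ closure(ran T)). Then π̃₂(T) = π̃₂(T*), where π̃₂(T*) is computed with μₙ on F. -/

import Mathlib

open scoped InnerProductSpace RightActions ENNReal

noncomputable section

/-- The Hilbert C⋆-module class as Mathlib defined it in December 2024 (right `A`-action through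
`Aᵐᵒᵖ`, inner product right `A`-linear in the second variable). Mathlib's `CStarModule` has since
changed meaning (left action), so the old notion is kept here under a new name. -/
class RightCStarModule (A : outParam <| Type*) (E : Type*) [NonUnitalSemiring A] [StarRing A] [Module ℂ A]
    [AddCommGroup E] [Module ℂ E] [PartialOrder A] [SMul Aᵐᵒᵖ E] [Norm A] [Norm E]
    extends Inner A E where
  inner_add_right {x} {y} {z} : inner x (y + z) = inner x y + inner x z
  inner_self_nonneg {x} : 0 ≤ inner x x
  inner_self {x} : inner x x = 0 ↔ x = 0
  inner_op_smul_right {a : A} {x y : E} : inner x (y <• a) = inner x y * a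
  inner_smul_right_complex {z : ℂ} {x} {y} : inner x (z • y) = z • inner x y
  star_inner x y : star (inner x y) = inner y x
  norm_eq_sqrt_norm_inner_self x : ‖x‖ = Real.sqrt ‖inner x x‖

variable {A : Type*} [NonUnitalCStarAlgebra A] [PartialOrder A] [StarOrderedRing A]
variable {E : Type*} [NormedAddCommGroup E] [NormedSpace ℂ E] [SMul Aᵐᵒᵖ E]
  [RightCStarModule A E] [CompleteSpace E]
variable {F : Type*} [NormedAddCommGroup F] [NormedSpace ℂ F] [SMul Aᵐᵒᵖ F]
  [RightCStarModule A F] [CompleteSpace F]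

/-- `μₙ(x₁,…,xₙ) = sup { ‖Σᵢ ⟪xᵢ, y⟫⟪y, xᵢ⟫‖^(1/2) : y ∈ E, ‖y‖ ≤ 1 }`. -/
def mu {G : Type*} [NormedAddCommGroup G] [NormedSpace ℂ G] [SMul Aᵐᵒᵖ G]
    [RightCStarModule A G] {n : ℕ} (x : Fin n → G) : ℝ :=
  ⨆ y : {y : G // ‖y‖ ≤ 1}, Real.sqrt ‖∑ i, ⟪x i, (y : G)⟫_A * ⟪(y : G), x i⟫_A‖

/-- `π̃₂(T) = sup { ‖Σᵢ ⟪Txᵢ, Txᵢ⟫‖^(1/2) : n ∈ ℕ, μₙ(x₁,…,xₙ) ≤ 1 }` as an element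
of `[0,∞]`. -/
def piTwo {G H : Type*} [NormedAddCommGroup G] [NormedSpace ℂ G] [SMul Aᵐᵒᵖ G]
    [RightCStarModule A G] [NormedAddCommGroup H] [NormedSpace ℂ H] [SMul Aᵐᵒᵖ H]
    [RightCStarModule A H] (T : G → H) : ℝ≥0∞ :=
  ⨆ (n : ℕ) (x : Fin n → G) (_ : mu x ≤ 1),
    ENNReal.ofReal (Real.sqrt ‖∑ i, ⟪T (x i), T (x i)⟫_A‖)

/-! Replacing `xᵢ` by `W xᵢ` does not increase `μₙ`, because `⟪W x, y⟫ = ⟪x, W* y⟫` and `W*` is a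
contraction along with `W`. It turns `Σ ⟪T xᵢ, T xᵢ⟫` into `Σ ⟪T* W xᵢ, T* W xᵢ⟫`, because
`⟪T x, T x⟫ = ⟪x, W* T T* W x⟫ = ⟪T* W x, T* W x⟫`. Hence `π̃₂(T) ≤ π̃₂(T*)`, and the second identity
for `W` gives the reverse inequality by the same argument with the roles of `T, W` and `T*, W*`
swapped. -/

open MulOpposite in
abbrev RightCStarModule.toCStarModuleMulOpposite {G : Type*} [NormedAddCommGroup G]
    [NormedSpace ℂ G] [SMul Aᵐᵒᵖ G] [RightCStarModule A G] : CStarModule Aᵐᵒᵖ G where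
  inner x y := op ⟪x, y⟫_A
  inner_add_right := congrArg op RightCStarModule.inner_add_right
  inner_self_nonneg := op_nonneg.2 RightCStarModule.inner_self_nonneg
  inner_self := op_eq_zero_iff _ |>.trans RightCStarModule.inner_self
  inner_op_smul_right := congrArg op RightCStarModule.inner_op_smul_right
  inner_smul_right_complex := congrArg op RightCStarModule.inner_smul_right_complex
  star_inner x y := congrArg op (RightCStarModule.star_inner x y)
  norm_eq_sqrt_norm_inner_self := RightCStarModule.norm_eq_sqrt_norm_inner_self

theorem RightCStarModule.norm_inner_le {G : Type*} [NormedAddCommGroup G] [NormedSpace ℂ G]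
    [SMul Aᵐᵒᵖ G] [RightCStarModule A G] (x y : G) : ‖⟪x, y⟫_A‖ ≤ ‖x‖ * ‖y‖ :=
  letI := toCStarModuleMulOpposite (A := A) (G := G)
  CStarModule.norm_inner_le (A := Aᵐᵒᵖ) G

section IsAdjointPair

variable {R : Type*} [NonUnitalSemiring R] [StarRing R] [Module ℂ R] [PartialOrder R] [Norm R]
variable {G : Type*} [AddCommGroup G] [Module ℂ G] [SMul Rᵐᵒᵖ G] [Norm G] [RightCStarModule R G]
variable {H : Type*} [AddCommGroup H] [Module ℂ H] [SMul Rᵐᵒᵖ H] [Norm H] [RightCStarModule R H]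

variable (R) in
def IsAdjointPair (T : G → H) (T' : H → G) : Prop :=
  ∀ x y, ⟪T x, y⟫_R = ⟪x, T' y⟫_R

theorem IsAdjointPair.symm {T : G → H} {T' : H → G} (hT : IsAdjointPair R T T') :
    IsAdjointPair R T' T := fun y x => by
  rw [← RightCStarModule.star_inner, ← hT, RightCStarModule.star_inner]

theorem IsAdjointPair.inner_self_eq {T : G → H} {T' : H → G} (hT : IsAdjointPair R T T')
    {W : G → H} {W' : H → G} (hW : IsAdjointPair R W W')
    (hTW : ∀ x, W' (T (T' (W x))) = T' (T x)) (x : G) :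
    ⟪T x, T x⟫_R = ⟪T' (W x), T' (W x)⟫_R :=
  calc ⟪T x, T x⟫_R = ⟪x, W' (T (T' (W x)))⟫_R := by rw [hT, hTW]
    _ = ⟪T' (W x), T' (W x)⟫_R := by rw [← hW, ← hT.symm]

end IsAdjointPair

section

variable {G : Type*} [NormedAddCommGroup G] [NormedSpace ℂ G] [SMul Aᵐᵒᵖ G] [RightCStarModule A G]
variable {H : Type*} [NormedAddCommGroup H] [NormedSpace ℂ H] [SMul Aᵐᵒᵖ H] [RightCStarModule A H]

theorem IsAdjointPair.opNorm_le {T : G →L[ℂ] H} {T' : H →L[ℂ] G} (hT : IsAdjointPair A T T') :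
    ‖T'‖ ≤ ‖T‖ := by
  refine T'.opNorm_le_bound (norm_nonneg T) fun y => ?_
  have hsq : ‖T' y‖ ^ 2 ≤ ‖T' y‖ * (‖T‖ * ‖y‖) :=
    calc ‖T' y‖ ^ 2 = ‖⟪T (T' y), y⟫_A‖ := by
          rw [RightCStarModule.norm_eq_sqrt_norm_inner_self, Real.sq_sqrt (norm_nonneg _), hT]
      _ ≤ ‖T (T' y)‖ * ‖y‖ := RightCStarModule.norm_inner_le _ _
      _ ≤ ‖T' y‖ * (‖T‖ * ‖y‖) := by
          rw [mul_left_comm, ← mul_assoc]; gcongr; exact T.le_opNorm _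
  rcases (norm_nonneg (T' y)).eq_or_lt with h | h
  · rw [← h]; positivity
  · nlinarith

theorem mu_bddAbove {n : ℕ} (x : Fin n → G) :
    BddAbove (Set.range fun y : {y : G // ‖y‖ ≤ 1} =>
      Real.sqrt ‖∑ i, ⟪x i, (y : G)⟫_A * ⟪(y : G), x i⟫_A‖) := by
  refine ⟨Real.sqrt (∑ i, ‖x i‖ ^ 2), ?_⟩
  rintro _ ⟨⟨y, hy⟩, rfl⟩
  refine Real.sqrt_le_sqrt <| (norm_sum_le _ _).trans <| Finset.sum_le_sum fun i _ => ?_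
  calc ‖⟪x i, y⟫_A * ⟪y, x i⟫_A‖ ≤ ‖⟪x i, y⟫_A‖ * ‖⟪y, x i⟫_A‖ := norm_mul_le _ _
    _ ≤ (‖x i‖ * ‖y‖) * (‖y‖ * ‖x i‖) := by
        gcongr <;> exact RightCStarModule.norm_inner_le _ _
    _ ≤ (‖x i‖ * 1) * (1 * ‖x i‖) := by gcongr
    _ = ‖x i‖ ^ 2 := by ring

theorem mu_map_le {W : G →L[ℂ] H} {W' : H →L[ℂ] G} (hW : IsAdjointPair A W W') (hW' : ‖W'‖ ≤ 1)
    {n : ℕ} (x : Fin n → G) : mu (A := A) (fun i => W (x i)) ≤ mu (A := A) x := by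
  have : Nonempty {y : H // ‖y‖ ≤ 1} := ⟨⟨0, by simp⟩⟩
  refine ciSup_le fun ⟨y, hy⟩ => ?_
  have hW'y : ‖W' y‖ ≤ 1 := (W'.le_opNorm_of_le hy).trans (by simpa using hW')
  simp only [hW _ y, ← hW.symm y]
  exact le_ciSup (mu_bddAbove x) ⟨W' y, hW'y⟩

theorem piTwo_le_piTwo_adjoint {T : G →L[ℂ] H} {T' : H →L[ℂ] G} (hT : IsAdjointPair A T T')
    {W : G →L[ℂ] H} {W' : H →L[ℂ] G} (hW : IsAdjointPair A W W') (hW' : ‖W'‖ ≤ 1)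
    (hTW : W'.comp ((T.comp T').comp W) = T'.comp T) :
    piTwo (A := A) ⇑T ≤ piTwo (A := A) ⇑T' := by
  refine iSup_le fun n => iSup_le fun x => iSup_le fun hx => ?_
  refine le_iSup_of_le n <| le_iSup_of_le (fun i => W (x i)) <|
    le_iSup_of_le ((mu_map_le hW hW' x).trans hx) ?_
  simp only [hT.inner_self_eq hW (DFunLike.congr_fun hTW), le_refl]

end

/-- If `T : E → F` is adjointable with adjoint `T'`, and there is an adjointable contraction
`W : E → F` with `W∘(T*∘T)∘W* = T∘T*` and `W*∘(T∘T*)∘W = T*∘T` (as holds for the partial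
isometry in the polar decomposition of `T` when `ker T` and `ker T*` are complemented by the
closures of the ranges of `T*` and `T`), then `π̃₂(T) = π̃₂(T*)`. -/
theorem piTwo_eq_piTwo_adjoint (T : E →L[ℂ] F) (T' : F →L[ℂ] E)
    (hT : ∀ (x : E) (y : F), ⟪T x, y⟫_A = ⟪x, T' y⟫_A)
    (W : E →L[ℂ] F) (W' : F →L[ℂ] E)
    (hW : ∀ (x : E) (y : F), ⟪W x, y⟫_A = ⟪x, W' y⟫_A)
    (hWnorm : ‖W‖ ≤ 1)
    (hW1 : (W.comp ((T'.comp T).comp W')) = T.comp T')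
    (hW2 : (W'.comp ((T.comp T').comp W)) = T'.comp T) :
    piTwo (⇑T) = piTwo (⇑T') :=
  le_antisymm (piTwo_le_piTwo_adjoint hT hW ((IsAdjointPair.opNorm_le hW).trans hWnorm) hW2)
    (piTwo_le_piTwo_adjoint (IsAdjointPair.symm hT) (IsAdjointPair.symm hW) hWnorm hW1)
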